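/- arXiv:1912.03253 — 5 statements merged into one kernel-verified Lean document; each statement's English description precedes it below -/
import Mathlib

section
/- Let Ψ: ℝ^d × ℝ^d → ℝ^d × ℝ^d be a continuously differentiable map that preserves Lebesgue volume (|det DΨ| = 1) and is time-reversible in the sense that S ∘ Ψ ∘ S ∘ Ψ = id, where S(θ,p) = (θ,−p). Let H: ℝ^d × ℝ^d → ℝ satisfy H ∘ S = H and ∫ exp(−H) = 1, and define ΔH(θ,p) = H(Ψ(θ,p)) − H(θ,p). If the set {ΔH = 0} has measure zero under the density exp(−H), then ∫ min(1, exp(−ΔH(θ,p))) exp(−H(θ,p)) dθ dp = 2 ∫_{ΔH<0} exp(−H(θ,p)) dθ dp. -/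
open MeasureTheory Real Function

/-! With `T = S ∘ Ψ`, reversibility makes `T` an involution, volume preservation of `Ψ` and `S`
makes it measure-preserving, and `H ∘ S = H` gives `ΔH = H ∘ T - H`. The integrand is then
`min g (g ∘ T)` for `g = exp (-H)`: it equals `g` on `{g < g ∘ T} = {ΔH < 0}` and `g ∘ T` on the
complement, which up to the null set `{ΔH = 0}` is `T ⁻¹' {g < g ∘ T}`; the change of variables
`x ↦ T x` turns the second piece into the first. -/
theorem integral_min_comp_involution_eq_two_mul {α : Type*} [MeasurableSpace α] {μ : Measure α}
    {T : α → α} (hT : MeasurePreserving T μ μ) (hTT : Involutive T) {g : α → ℝ}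
    (hg : Integrable g μ) (hnull : μ {x | g (T x) = g x} = 0) :
    ∫ x, min (g x) (g (T x)) ∂μ = 2 * ∫ x in {x | g x < g (T x)}, g x ∂μ := by
  set A := {x | g x < g (T x)}
  have hgT : Integrable (g ∘ T) μ := hT.integrable_comp_of_integrable hg
  have hA : NullMeasurableSet A μ := nullMeasurableSet_lt hg.aemeasurable hgT.aemeasurable
  have hAc : (Aᶜ : Set α) =ᵐ[μ] T ⁻¹' A := by
    refine Filter.eventuallyEq_set.mpr ?_
    filter_upwards [measure_eq_zero_iff_ae_notMem.mp hnull] with x hx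
    change ¬g x < g (T x) ↔ g (T x) < g (T (T x))
    rw [hTT x, not_lt]
    exact ⟨fun h => lt_of_le_of_ne h hx, le_of_lt⟩
  have hTemb : MeasurableEmbedding T :=
    (MeasurableEquiv.ofInvolutive T hTT hT.measurable).measurableEmbedding
  calc ∫ x, min (g x) (g (T x)) ∂μ
      = (∫ x in A, min (g x) (g (T x)) ∂μ) + ∫ x in Aᶜ, min (g x) (g (T x)) ∂μ :=
        (integral_add_compl₀ hA (hg.inf hgT)).symm
    _ = (∫ x in A, g x ∂μ) + ∫ x in T ⁻¹' A, g (T x) ∂μ := by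
        rw [setIntegral_congr_fun₀ hA fun x hx => min_eq_left hx.le,
          setIntegral_congr_fun₀ hA.compl
            fun x (hx : ¬g x < g (T x)) => min_eq_right (le_of_not_gt hx),
          setIntegral_congr_set hAc]
    _ = 2 * ∫ x in A, g x ∂μ := by
        rw [hT.setIntegral_preimage_emb hTemb, two_mul]

theorem hmc_expected_acceptance_eq_twice_prob_neg_general
    (d : ℕ)
    (Ψ : (Fin d → ℝ) × (Fin d → ℝ) → (Fin d → ℝ) × (Fin d → ℝ))
    (S : (Fin d → ℝ) × (Fin d → ℝ) → (Fin d → ℝ) × (Fin d → ℝ))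
    (hS : S = fun x => (x.1, -x.2))
    (hΨvol : MeasurePreserving Ψ
      (volume : Measure ((Fin d → ℝ) × (Fin d → ℝ))) volume)
    (hΨrev : S ∘ Ψ ∘ S ∘ Ψ = id)
    (H : (Fin d → ℝ) × (Fin d → ℝ) → ℝ)
    (hHS : H ∘ S = H)
    (hHprob : ∫ x, Real.exp (-H x) = 1)
    (ΔH : (Fin d → ℝ) × (Fin d → ℝ) → ℝ)
    (hΔH : ΔH = fun x => H (Ψ x) - H x)
    (hzero : (volume.withDensity fun x => ENNReal.ofReal (Real.exp (-H x)))
      {x | ΔH x = 0} = 0) :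
    ∫ x, min 1 (Real.exp (-ΔH x)) * Real.exp (-H x)
      = 2 * ∫ x in {x | ΔH x < 0}, Real.exp (-H x) := by
  have hS_vol : MeasurePreserving S volume volume := by
    subst hS
    exact (MeasurePreserving.id volume).prod (Measure.measurePreserving_neg volume)
  have hg : Integrable (fun x => exp (-H x)) :=
    Integrable.of_integral_ne_zero (hHprob ▸ one_ne_zero)
  have hΔH_eq (x) : ΔH x = H ((S ∘ Ψ) x) - H x := by
    rw [hΔH, comp_apply, ← comp_apply (f := H), hHS]
  have hacc (x) :
      min 1 (exp (-ΔH x)) * exp (-H x) = min (exp (-H x)) (exp (-H ((S ∘ Ψ) x))) := by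
    rw [min_mul_of_nonneg _ _ (exp_pos _).le, one_mul, ← exp_add, hΔH_eq]
    ring_nf
  have hneg : {x | ΔH x < 0} = {x | exp (-H x) < exp (-H ((S ∘ Ψ) x))} := by
    ext x
    simp only [Set.mem_ofPred_eq, hΔH_eq, exp_lt_exp]
    constructor <;> intro h <;> linarith
  have hnull : volume {x | exp (-H ((S ∘ Ψ) x)) = exp (-H x)} = 0 := by
    rw [withDensity_apply_eq_zero' hg.aemeasurable.ennreal_ofReal] at hzero
    simpa [hΔH_eq, sub_eq_zero, exp_pos] using hzero
  simp_rw [hacc, hneg]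
  exact integral_min_comp_involution_eq_two_mul (hS_vol.comp hΨvol) (congrFun hΨrev) hg hnull

/-- The expected acceptance rate of HMC with a volume-preserving, time-reversible
integrator equals twice the probability that the energy error is negative. -/
theorem hmc_expected_acceptance_eq_twice_prob_neg
    (d : ℕ)
    (Ψ : (Fin d → ℝ) × (Fin d → ℝ) → (Fin d → ℝ) × (Fin d → ℝ))
    (S : (Fin d → ℝ) × (Fin d → ℝ) → (Fin d → ℝ) × (Fin d → ℝ))
    (hS : S = fun x => (x.1, -x.2))
    (hΨsmooth : ContDiff ℝ 1 Ψ)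
    (hΨvol : MeasurePreserving Ψ
      (volume : Measure ((Fin d → ℝ) × (Fin d → ℝ))) volume)
    (hΨrev : S ∘ Ψ ∘ S ∘ Ψ = id)
    (H : (Fin d → ℝ) × (Fin d → ℝ) → ℝ)
    (hHS : H ∘ S = H)
    (hHprob : ∫ x, Real.exp (-H x) = 1)
    (ΔH : (Fin d → ℝ) × (Fin d → ℝ) → ℝ)
    (hΔH : ΔH = fun x => H (Ψ x) - H x)
    (hzero : (volume.withDensity fun x => ENNReal.ofReal (Real.exp (-H x)))
      {x | ΔH x = 0} = 0) :
    ∫ x, min 1 (Real.exp (-ΔH x)) * Real.exp (-H x)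
      = 2 * ∫ x in {x | ΔH x < 0}, Real.exp (-H x) :=
  hmc_expected_acceptance_eq_twice_prob_neg_general d Ψ S hS hΨvol hΨrev H hHS hHprob ΔH hΔH hzero
end

section
/- Under the hypotheses of the previous setting (Ψ volume-preserving and time-reversible with S∘Ψ∘S∘Ψ = id, H∘S = H, exp(−H) a probability density, ΔH = H∘Ψ − H), one has ∫ exp(−ΔH(θ,p)) exp(−H(θ,p)) dθ dp = 1, i.e. E[exp(−ΔH)] = 1 at stationarity. -/
open MeasureTheory Real

/-! The integrand telescopes to `exp (-H ∘ Ψ)`, and since `Ψ` pushes Lebesgue measure forward to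
itself, its integral is `∫ exp (-H) = 1`. The change of variables needs `exp (-H)` to be
a.e.-strongly measurable, which follows from its integral being nonzero. -/

theorem MeasureTheory.MeasurePreserving.integral_comp_of_aestronglyMeasurable
    {α β E : Type*} [MeasurableSpace α] [MeasurableSpace β] [NormedAddCommGroup E]
    [NormedSpace ℝ E] {μ : Measure α} {ν : Measure β} {f : α → β}
    (hf : MeasurePreserving f μ ν) {g : β → E} (hg : AEStronglyMeasurable g ν) :
    ∫ x, g (f x) ∂μ = ∫ y, g y ∂ν := by
  rw [← integral_map hf.aemeasurable (hf.map_eq.symm ▸ hg), hf.map_eq]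

theorem Real.exp_neg_sub_mul_exp_neg (a b : ℝ) : exp (-(a - b)) * exp (-b) = exp (-a) := by
  rw [← exp_add]
  ring_nf

theorem hmc_exp_neg_energy_error_mean_one_general
    (d : ℕ)
    (Ψ : (Fin d → ℝ) × (Fin d → ℝ) → (Fin d → ℝ) × (Fin d → ℝ))
    (hΨvol : MeasurePreserving Ψ
      (volume : Measure ((Fin d → ℝ) × (Fin d → ℝ))) volume)
    (H : (Fin d → ℝ) × (Fin d → ℝ) → ℝ)
    (hHprob : ∫ x, Real.exp (-H x) = 1)
    (ΔH : (Fin d → ℝ) × (Fin d → ℝ) → ℝ)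
    (hΔH : ΔH = fun x => H (Ψ x) - H x) :
    ∫ x, Real.exp (-ΔH x) * Real.exp (-H x) = 1 := by
  have hint : Integrable (fun x => exp (-H x)) :=
    Integrable.of_integral_ne_zero (by rw [hHprob]; exact one_ne_zero)
  subst hΔH
  calc ∫ x, exp (-(H (Ψ x) - H x)) * exp (-H x)
      = ∫ x, exp (-H (Ψ x)) := by simp_rw [exp_neg_sub_mul_exp_neg]
    _ = ∫ x, exp (-H x) :=
        hΨvol.integral_comp_of_aestronglyMeasurable hint.aestronglyMeasurable
    _ = 1 := hHprob

/-- At stationarity, `E[exp(-ΔH)] = 1` for a volume-preserving, time-reversible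
integrator. -/
theorem hmc_exp_neg_energy_error_mean_one
    (d : ℕ)
    (Ψ : (Fin d → ℝ) × (Fin d → ℝ) → (Fin d → ℝ) × (Fin d → ℝ))
    (S : (Fin d → ℝ) × (Fin d → ℝ) → (Fin d → ℝ) × (Fin d → ℝ))
    (hS : S = fun x => (x.1, -x.2))
    (hΨvol : MeasurePreserving Ψ
      (volume : Measure ((Fin d → ℝ) × (Fin d → ℝ))) volume)
    (hΨrev : S ∘ Ψ ∘ S ∘ Ψ = id)
    (H : (Fin d → ℝ) × (Fin d → ℝ) → ℝ)
    (hHS : H ∘ S = H)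
    (hHprob : ∫ x, Real.exp (-H x) = 1)
    (ΔH : (Fin d → ℝ) × (Fin d → ℝ) → ℝ)
    (hΔH : ΔH = fun x => H (Ψ x) - H x) :
    ∫ x, Real.exp (-ΔH x) * Real.exp (-H x) = 1 :=
  hmc_exp_neg_energy_error_mean_one_general d Ψ hΨvol H hHprob ΔH hΔH
end

section
/- Let (θ,p) be distributed as the standard Gaussian on ℝ², and let ΔH(θ,p) = (1/2)(Aθ² + 2Bθp + Cp²) with A = sin²(α)(χ⁻² − 1), B = cos(α) sin(α)(χ − χ⁻¹), C = sin²(α)(χ² − 1) for some real α and χ > 0. Then E[ΔH] = sin²(α) · (1/2)(χ − 1/χ)², and in particular 0 ≤ E[ΔH] ≤ (1/2)(χ − 1/χ)². -/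
open MeasureTheory Real ProbabilityTheory

/-! Under the product of two independent standard Gaussians the cross term `θ p` of the quadratic
form averages to zero and `θ²`, `p²` average to one, so `E[ΔH] = (A + C) / 2`; and
`(χ⁻² - 1) + (χ² - 1) = (χ - χ⁻¹)²`. -/

lemma integral_sq_gaussianReal (m : ℝ) (v : NNReal) :
    ∫ x, x ^ 2 ∂gaussianReal m v = m ^ 2 + v := by
  have h := variance_eq_sub (memLp_id_gaussianReal (μ := m) (v := v) 2)
  rw [variance_id_gaussianReal] at h
  simp only [Pi.pow_apply, id_eq, integral_id_gaussianReal] at h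
  linarith

lemma integral_quadratic_form_prod {μ ν : Measure ℝ}
    [IsProbabilityMeasure μ] [IsProbabilityMeasure ν] (hμ : MemLp id 2 μ) (hν : MemLp id 2 ν)
    (a b c : ℝ) :
    ∫ z, a * z.1 ^ 2 + b * (z.1 * z.2) + c * z.2 ^ 2 ∂μ.prod ν
      = a * ∫ x, x ^ 2 ∂μ + b * ((∫ x, x ∂μ) * ∫ y, y ∂ν) + c * ∫ y, y ^ 2 ∂ν := by
  have hμ1 : Integrable (fun x : ℝ => x) μ := hμ.integrable one_le_two
  have hν1 : Integrable (fun y : ℝ => y) ν := hν.integrable one_le_two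
  rw [integral_add, integral_add, integral_const_mul, integral_const_mul, integral_const_mul,
    integral_fun_fst (fun x => x ^ 2), integral_prod_mul (fun x => x) (fun y => y),
    integral_fun_snd (fun y => y ^ 2)]
  · simp
  · exact (hμ.integrable_sq.comp_fst ν).const_mul a
  · exact (hμ1.mul_prod hν1).const_mul b
  · exact ((hμ.integrable_sq.comp_fst ν).const_mul a).add ((hμ1.mul_prod hν1).const_mul b)
  · exact (hν.integrable_sq.comp_snd μ).const_mul c

lemma integral_quadratic_form_gaussianReal_prod (a b c : ℝ) :
    ∫ z, a * z.1 ^ 2 + b * (z.1 * z.2) + c * z.2 ^ 2 ∂(gaussianReal 0 1).prod (gaussianReal 0 1)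
      = a + c := by
  rw [integral_quadratic_form_prod (memLp_id_gaussianReal 2) (memLp_id_gaussianReal 2),
    integral_sq_gaussianReal, integral_id_gaussianReal]
  simp

lemma inv_sq_sub_one_add_sq_sub_one {χ : ℝ} (hχ : χ ≠ 0) :
    (χ⁻¹ ^ 2 - 1) + (χ ^ 2 - 1) = (χ - 1 / χ) ^ 2 := by
  field_simp
  ring

theorem expected_energy_error_univariate_gaussian_general
    (α χ : ℝ) (hχ : 0 < χ)
    (A B C : ℝ)
    (hA : A = Real.sin α ^ 2 * (χ⁻¹ ^ 2 - 1))
    (hC : C = Real.sin α ^ 2 * (χ ^ 2 - 1))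
    (ΔH : ℝ × ℝ → ℝ)
    (hΔH : ΔH = fun v =>
      (1 / 2) * (A * v.1 ^ 2 + 2 * B * v.1 * v.2 + C * v.2 ^ 2)) :
    (∫ v, ΔH v ∂((gaussianReal 0 1).prod (gaussianReal 0 1)))
        = Real.sin α ^ 2 * ((1 / 2) * (χ - 1 / χ) ^ 2)
      ∧ 0 ≤ ∫ v, ΔH v ∂((gaussianReal 0 1).prod (gaussianReal 0 1))
      ∧ (∫ v, ΔH v ∂((gaussianReal 0 1).prod (gaussianReal 0 1)))
        ≤ (1 / 2) * (χ - 1 / χ) ^ 2 := by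
  have hmean : ∫ v, ΔH v ∂((gaussianReal 0 1).prod (gaussianReal 0 1))
      = Real.sin α ^ 2 * ((1 / 2) * (χ - 1 / χ) ^ 2) := by
    have hΔH' : ΔH = fun v => A / 2 * v.1 ^ 2 + B * (v.1 * v.2) + C / 2 * v.2 ^ 2 := by
      rw [hΔH]; ext v; ring
    rw [hΔH', integral_quadratic_form_gaussianReal_prod, hA, hC,
      ← inv_sq_sub_one_add_sq_sub_one hχ.ne']
    ring
  refine ⟨hmean, ?_, ?_⟩ <;> rw [hmean]
  · positivity
  · exact mul_le_of_le_one_left (by positivity) (sin_sq_le_one α)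

/-- The expected energy error at stationarity for the standard univariate Gaussian
target: `E[ΔH] = sin²(α) (1/2)(χ − 1/χ)²`, hence `0 ≤ E[ΔH] ≤ (1/2)(χ − 1/χ)²`. -/
theorem expected_energy_error_univariate_gaussian
    (α χ : ℝ) (hχ : 0 < χ)
    (A B C : ℝ)
    (hA : A = Real.sin α ^ 2 * (χ⁻¹ ^ 2 - 1))
    (hB : B = Real.cos α * Real.sin α * (χ - χ⁻¹))
    (hC : C = Real.sin α ^ 2 * (χ ^ 2 - 1))
    (ΔH : ℝ × ℝ → ℝ)
    (hΔH : ΔH = fun v =>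
      (1 / 2) * (A * v.1 ^ 2 + 2 * B * v.1 * v.2 + C * v.2 ^ 2)) :
    (∫ v, ΔH v ∂((gaussianReal 0 1).prod (gaussianReal 0 1)))
        = Real.sin α ^ 2 * ((1 / 2) * (χ - 1 / χ) ^ 2)
      ∧ 0 ≤ ∫ v, ΔH v ∂((gaussianReal 0 1).prod (gaussianReal 0 1))
      ∧ (∫ v, ΔH v ∂((gaussianReal 0 1).prod (gaussianReal 0 1)))
        ≤ (1 / 2) * (χ - 1 / χ) ^ 2 :=
  expected_energy_error_univariate_gaussian_general α χ hχ A B C hA hC ΔH hΔH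
end

section
/- Let (θ,p) ~ N(0, I₂) on ℝ² and ΔH = (1/2)(Aθ² + 2Bθp + Cp²) with A = sin²(α)(χ⁻² − 1), B = cos(α)sin(α)(χ − χ⁻¹), C = sin²(α)(χ² − 1), α ∈ ℝ, χ > 0. Set μ = E[ΔH]. Then E[(ΔH)²] = 2μ + 3μ². -/
/-!
Write `z = (θ, p)` and `ΔH z = ½ zᵀ M z` with `M = [[A, B], [B, C]]`. For a standard Gaussian `z`,
`E[ΔH] = tr M / 2` and `E[ΔH²] = (tr M)² / 4 + tr (M²) / 2`; the moments `E[x²] = 1`, `E[x⁴] = 3`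
behind this follow from Gaussian integration by parts, `E[x^(n+2)] = (n+1) v E[x^n]`.
Since `ΔH z = H(Φ z) - H(z)` for the volume-preserving linear map `Φ`, `I + M = Φᵀ Φ` has
determinant one, i.e. `B² = A + C + A C`; this turns `tr (M²) = A² + 2B² + C²` into
`(tr M)² + 2 tr M`.
-/

open MeasureTheory Real ProbabilityTheory
open scoped NNReal Nat

lemma hasDerivAt_gaussianPDFReal (μ : ℝ) (v : ℝ≥0) (x : ℝ) :
    HasDerivAt (gaussianPDFReal μ v) (-((x - μ) / v) * gaussianPDFReal μ v x) x := by
  have h := ((((hasDerivAt_id' x).sub_const μ).fun_pow 2).neg.div_const (2 * (v : ℝ))).exp.const_mul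
    (√(2 * π * v))⁻¹
  refine h.congr_deriv ?_
  rcases eq_or_ne (v : ℝ) 0 with hv | hv
  · simp [hv]
  · simp only [gaussianPDFReal, Pi.neg_apply]; field_simp; ring

lemma integrable_pow_gaussianReal (μ : ℝ) (v : ℝ≥0) (n : ℕ) :
    Integrable (fun x : ℝ => x ^ n) (gaussianReal μ v) := by
  refine ((memLp_id_gaussianReal n).integrable_norm_pow' (f := id)).mono' (by fun_prop) ?_
  filter_upwards with x using by simp [norm_pow]

lemma integrable_gaussianPDFReal_mul {μ : ℝ} {v : ℝ≥0} (hv : v ≠ 0) {f : ℝ → ℝ}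
    (hf : Integrable f (gaussianReal μ v)) :
    Integrable (fun x => gaussianPDFReal μ v x * f x) := by
  rw [gaussianReal_of_var_ne_zero μ hv, integrable_withDensity_iff_integrable_smul'
    (measurable_gaussianPDF μ v) (ae_of_all _ fun _ => gaussianPDF_lt_top)] at hf
  simpa using hf

lemma integral_pow_add_two_gaussianReal (v : ℝ≥0) (n : ℕ) :
    ∫ x, x ^ (n + 2) ∂gaussianReal 0 v = (n + 1) * v * ∫ x, x ^ n ∂gaussianReal 0 v := by
  rcases eq_or_ne v 0 with rfl | hv
  · simp
  have hint (k : ℕ) := integrable_gaussianPDFReal_mul hv (integrable_pow_gaussianReal 0 v k)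
  have hibp := integral_mul_deriv_eq_deriv_mul_of_integrable
    (u := fun x : ℝ => x ^ (n + 1)) (u' := fun x => (n + 1) * x ^ n)
    (v := gaussianPDFReal 0 v) (v' := fun x => -(x / v) * gaussianPDFReal 0 v x)
    (fun x _ => by simpa using hasDerivAt_pow (n + 1) x)
    (fun x _ => by simpa using hasDerivAt_gaussianPDFReal 0 v x)
    (((hint (n + 2)).const_mul (-(v : ℝ)⁻¹)).congr (ae_of_all _ fun x => by
      simp only [Pi.mul_apply]; ring))
    (((hint n).const_mul (n + 1)).congr (ae_of_all _ fun x => by simp only [Pi.mul_apply]; ring))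
    (((hint (n + 1))).congr (ae_of_all _ fun x => by simp only [Pi.mul_apply]; ring))
  have hlhs : ∫ x, x ^ (n + 1) * (-(x / v) * gaussianPDFReal 0 v x)
      = -(v : ℝ)⁻¹ * ∫ x, gaussianPDFReal 0 v x * x ^ (n + 2) := by
    rw [← integral_const_mul]; congr 1; funext x; ring
  have hrhs : ∫ x, (n + 1) * x ^ n * gaussianPDFReal 0 v x
      = (n + 1) * ∫ x, gaussianPDFReal 0 v x * x ^ n := by
    rw [← integral_const_mul]; congr 1; funext x; ring
  simp only [integral_gaussianReal_eq_integral_smul hv, smul_eq_mul]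
  rw [hlhs, hrhs] at hibp
  field_simp at hibp
  linear_combination -hibp

lemma integral_pow_two_mul_gaussianReal (v : ℝ≥0) (k : ℕ) :
    ∫ x, x ^ (2 * k) ∂gaussianReal 0 v = v ^ k * (2 * k - 1)‼ := by
  induction k with
  | zero => simp
  | succ k ih =>
    rw [show 2 * (k + 1) = 2 * k + 2 by ring, integral_pow_add_two_gaussianReal, ih,
      show 2 * k + 2 - 1 = 2 * k + 1 by omega, Nat.doubleFactorial_add_one]
    push_cast
    ring

lemma integral_pow_two_gaussianReal (v : ℝ≥0) : ∫ x, x ^ 2 ∂gaussianReal 0 v = v := by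
  simpa using integral_pow_two_mul_gaussianReal v 1

lemma integral_pow_four_gaussianReal (v : ℝ≥0) : ∫ x, x ^ 4 ∂gaussianReal 0 v = 3 * v ^ 2 := by
  simpa [Nat.doubleFactorial, mul_comm] using integral_pow_two_mul_gaussianReal v 2

lemma integral_sum_monomial_prod_gaussianReal (μ₁ μ₂ : ℝ) (v₁ v₂ : ℝ≥0) {n : ℕ}
    (c : Fin (n + 1) → ℝ) :
    ∫ z, ∑ k : Fin (n + 1), c k * (z.1 ^ (k : ℕ) * z.2 ^ (n - k))
        ∂(gaussianReal μ₁ v₁).prod (gaussianReal μ₂ v₂)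
      = ∑ k : Fin (n + 1), c k *
          ((∫ x, x ^ (k : ℕ) ∂gaussianReal μ₁ v₁) * ∫ x, x ^ (n - k) ∂gaussianReal μ₂ v₂) := by
  rw [integral_finsetSum _ fun (k : Fin (n + 1)) _ =>
    ((integrable_pow_gaussianReal μ₁ v₁ k).mul_prod
      (integrable_pow_gaussianReal μ₂ v₂ (n - k))).const_mul (c k)]
  refine Finset.sum_congr rfl fun k _ => ?_
  rw [integral_const_mul, integral_prod_mul (fun x : ℝ => x ^ (k : ℕ)) fun x : ℝ => x ^ (n - k)]

lemma integral_quadraticForm_gaussianReal_prod (a b c : ℝ) :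
    ∫ z, (1 / 2) * (a * z.1 ^ 2 + 2 * b * z.1 * z.2 + c * z.2 ^ 2)
        ∂(gaussianReal 0 1).prod (gaussianReal 0 1) = (a + c) / 2 := by
  calc _ = ∫ z, ∑ k : Fin 3, ![c / 2, b, a / 2] k * (z.1 ^ (k : ℕ) * z.2 ^ (2 - (k : ℕ)))
          ∂(gaussianReal 0 1).prod (gaussianReal 0 1) :=
        integral_congr_ae (ae_of_all _ fun z => by simp [Fin.sum_univ_three]; ring)
    _ = _ := integral_sum_monomial_prod_gaussianReal 0 0 1 1 _
    _ = (a + c) / 2 := by simp [Fin.sum_univ_three, integral_pow_two_gaussianReal]; ring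

lemma integral_sq_quadraticForm_gaussianReal_prod (a b c : ℝ) :
    ∫ z, ((1 / 2) * (a * z.1 ^ 2 + 2 * b * z.1 * z.2 + c * z.2 ^ 2)) ^ 2
        ∂(gaussianReal 0 1).prod (gaussianReal 0 1)
      = ((a + c) / 2) ^ 2 + (a ^ 2 + 2 * b ^ 2 + c ^ 2) / 2 := by
  calc _ = ∫ z, ∑ k : Fin 5, ![c ^ 2 / 4, b * c, b ^ 2 + a * c / 2, a * b, a ^ 2 / 4] k
            * (z.1 ^ (k : ℕ) * z.2 ^ (4 - (k : ℕ))) ∂(gaussianReal 0 1).prod (gaussianReal 0 1) :=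
        integral_congr_ae (ae_of_all _ fun z => by simp [Fin.sum_univ_five]; ring)
    _ = _ := integral_sum_monomial_prod_gaussianReal 0 0 1 1 _
    _ = _ := by
      simp [Fin.sum_univ_five, integral_pow_two_gaussianReal, integral_pow_four_gaussianReal]
      ring

lemma one_add_mul_one_add_sub_sq_eq_one (α : ℝ) {χ : ℝ} (hχ : χ ≠ 0) :
    (1 + sin α ^ 2 * (χ⁻¹ ^ 2 - 1)) * (1 + sin α ^ 2 * (χ ^ 2 - 1))
      - (cos α * sin α * (χ - χ⁻¹)) ^ 2 = 1 := by
  rw [mul_pow, mul_pow, cos_sq']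
  field_simp
  ring

/-- Moment of the energy error for the standard univariate Gaussian target:
a universal polynomial in the mean energy error μ. -/
theorem energy_error_moment_2
    (α χ : ℝ) (hχ : 0 < χ)
    (A B C : ℝ)
    (hA : A = Real.sin α ^ 2 * (χ⁻¹ ^ 2 - 1))
    (hB : B = Real.cos α * Real.sin α * (χ - χ⁻¹))
    (hC : C = Real.sin α ^ 2 * (χ ^ 2 - 1))
    (ΔH : ℝ × ℝ → ℝ)
    (hΔH : ΔH = fun v =>
      (1 / 2) * (A * v.1 ^ 2 + 2 * B * v.1 * v.2 + C * v.2 ^ 2))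
    (μ : ℝ)
    (hμ : μ = ∫ v, ΔH v ∂((gaussianReal 0 1).prod (gaussianReal 0 1))) :
    (∫ v, (ΔH v) ^ 2 ∂((gaussianReal 0 1).prod (gaussianReal 0 1))) = 2 * μ + 3 * μ ^ 2 := by
  have hdet : (1 + A) * (1 + C) - B ^ 2 = 1 := by
    subst hA hB hC
    exact one_add_mul_one_add_sub_sq_eq_one α hχ.ne'
  subst hμ hΔH
  rw [integral_sq_quadraticForm_gaussianReal_prod, integral_quadraticForm_gaussianReal_prod]
  linear_combination -hdet
end

section
/- If ζ is a real Gaussian random variable with mean μ ≥ 0 and variance 2μ, then E[min(1, exp(−ζ))] = 2 P(ζ < 0) = 2Φ(−√(μ/2)), where Φ is the standard normal cumulative distribution function. (For μ = 0, ζ is the constant 0 and both sides equal 1.) -/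
/-!
For `ζ ~ N(μ, 2μ)` with density `p`, completing the square gives `p(z) e^{-z} = p(-z)`: the
tilt by `e^{-z}` reflects the law. Hence `E[e^{-ζ}; ζ > 0] = P(ζ < 0)`, and splitting
`min(1, e^{-ζ})` at `0` gives `E[min(1, e^{-ζ})] = P(ζ ≤ 0) + P(ζ < 0) = 2 P(ζ ≤ 0)`.
Standardizing, `P(ζ ≤ 0) = Φ(-μ / √(2μ)) = Φ(-√(μ/2))`.
-/

open MeasureTheory Real ProbabilityTheory

noncomputable def stdNormalCDF (x : ℝ) : ℝ :=
  ∫ t in Set.Iic x, ProbabilityTheory.gaussianPDFReal 0 1 t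

open Set
open scoped NNReal

lemma gaussianPDFReal_mul_exp_neg {m : ℝ} {v : ℝ≥0} (hv : (v : ℝ) = 2 * m) (z : ℝ) :
    gaussianPDFReal m v z * exp (-z) = gaussianPDFReal m v (-z) := by
  rcases eq_or_ne m 0 with rfl | hm
  · -- degenerate variance: `gaussianPDFReal m 0` is identically zero
    simp [show v = 0 by exact_mod_cast hv.trans (mul_zero 2), gaussianPDFReal_zero_var]
  simp only [gaussianPDFReal, mul_assoc, ← exp_add]
  congr 2
  rw [hv]
  field_simp
  ring

lemma integral_Ioi_gaussianPDFReal_mul_exp_neg {m : ℝ} {v : ℝ≥0} (hv : (v : ℝ) = 2 * m) :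
    ∫ z in Ioi 0, gaussianPDFReal m v z * exp (-z) = ∫ z in Iic 0, gaussianPDFReal m v z := by
  simp_rw [gaussianPDFReal_mul_exp_neg hv, integral_comp_neg_Ioi, neg_zero]

lemma integral_min_one_exp_neg_gaussianReal {m : ℝ} {v : ℝ≥0} (hv₀ : v ≠ 0)
    (hv : (v : ℝ) = 2 * m) :
    ∫ z, min 1 (exp (-z)) ∂gaussianReal m v = 2 * (gaussianReal m v (Iic 0)).toReal := by
  set f := fun z : ℝ ↦ gaussianPDFReal m v z * min 1 (exp (-z))
  have hf : Integrable f :=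
    (integrable_gaussianPDFReal m v).mul_bdd (c := 1) (by fun_prop) <| .of_forall fun z ↦ by
      rw [norm_of_nonneg (le_min zero_le_one (exp_pos _).le)]
      exact min_le_left _ _
  have h_Iic : ∫ z in Iic 0, f z = ∫ z in Iic 0, gaussianPDFReal m v z :=
    setIntegral_congr_fun measurableSet_Iic fun z hz ↦ by
      simp [f, min_eq_left (one_le_exp (neg_nonneg.2 hz))]
  have h_Ioi : ∫ z in Ioi 0, f z = ∫ z in Ioi 0, gaussianPDFReal m v z * exp (-z) :=
    setIntegral_congr_fun measurableSet_Ioi fun z hz ↦ by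
      simp [f, min_eq_right (exp_le_one_iff.2 (neg_nonpos.2 (le_of_lt hz)))]
  rw [integral_gaussianReal_eq_integral_smul hv₀, gaussianReal_apply_eq_integral m hv₀,
    ENNReal.toReal_ofReal
      (setIntegral_nonneg measurableSet_Iic fun z _ ↦ gaussianPDFReal_nonneg m v z)]
  simp_rw [smul_eq_mul]
  rw [← intervalIntegral.integral_Iic_add_Ioi hf.integrableOn hf.integrableOn, h_Iic, h_Ioi,
    integral_Ioi_gaussianPDFReal_mul_exp_neg hv, two_mul]

lemma gaussianReal_Iic_eq_standard {m : ℝ} {v : ℝ≥0} (hv₀ : v ≠ 0) (x : ℝ) :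
    gaussianReal m v (Iic x) = gaussianReal 0 1 (Iic ((x - m) / √v)) := by
  have hσ : 0 < √(v : ℝ) := sqrt_pos.2 (by positivity)
  have h_std : ((gaussianReal 0 1).map (√v * ·)).map (· + m) = gaussianReal m v := by
    rw [gaussianReal_map_const_mul, gaussianReal_map_add_const, mul_zero, zero_add, mul_one]
    congr 1
    ext
    simp [sq_sqrt v.coe_nonneg]
  rw [← h_std, Measure.map_apply (measurable_add_const m) measurableSet_Iic,
    preimage_add_const_Iic, Measure.map_apply (measurable_const_mul _) measurableSet_Iic,
    preimage_const_mul_Iic₀ _ hσ]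

lemma stdNormalCDF_eq_toReal_gaussianReal (x : ℝ) :
    stdNormalCDF x = (gaussianReal 0 1 (Iic x)).toReal := by
  rw [gaussianReal_apply_eq_integral 0 one_ne_zero, ENNReal.toReal_ofReal
    (setIntegral_nonneg measurableSet_Iic fun t _ ↦ gaussianPDFReal_nonneg 0 1 t), stdNormalCDF]

lemma stdNormalCDF_zero : stdNormalCDF 0 = 1 / 2 := by
  have h_symm : ∫ t in Ioi 0, gaussianPDFReal 0 1 t = stdNormalCDF 0 := by
    rw [stdNormalCDF, ← neg_zero, ← integral_comp_neg_Iic, neg_zero]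
    simp [gaussianPDFReal]
  have h_total := intervalIntegral.integral_Iic_add_Ioi (b := 0)
    (integrable_gaussianPDFReal 0 1).integrableOn (integrable_gaussianPDFReal 0 1).integrableOn
  rw [integral_gaussianPDFReal_eq_one 0 one_ne_zero, h_symm] at h_total
  change stdNormalCDF 0 + stdNormalCDF 0 = 1 at h_total
  linarith

/-- If `ζ ~ N(μ, 2μ)` with `μ ≥ 0`, then
`E[min(1, e^{-ζ})] = 2 P(ζ < 0) = 2 Φ(−√(μ/2))`.
(For `μ = 0`, `ζ` is the constant `0` and both `E[min(1, e^{-ζ})]` and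
`2Φ(−√(μ/2))` equal `1`.) -/
theorem expected_acceptance_gaussian_energy_error
    (μ : ℝ) (hμ : 0 ≤ μ) :
    (∫ z, min 1 (Real.exp (-z)) ∂(gaussianReal μ (2 * μ).toNNReal))
        = 2 * stdNormalCDF (-Real.sqrt (μ / 2))
      ∧ (0 < μ →
        (∫ z, min 1 (Real.exp (-z)) ∂(gaussianReal μ (2 * μ).toNNReal))
          = 2 * ((gaussianReal μ (2 * μ).toNNReal) {z | z < 0}).toReal) := by
  rcases hμ.eq_or_lt with rfl | hμ_pos
  · refine ⟨?_, fun h ↦ (lt_irrefl 0 h).elim⟩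
    simp [gaussianReal_zero_var, stdNormalCDF_zero]
  have hv : ((2 * μ).toNNReal : ℝ) = 2 * μ := coe_toNNReal _ (by positivity)
  have hv₀ : (2 * μ).toNNReal ≠ 0 := by simpa using hμ_pos
  rw [integral_min_one_exp_neg_gaussianReal hv₀ hv]
  refine ⟨?_, fun _ ↦ ?_⟩
  · have h_arg : (0 - μ) / √(2 * μ) = -√(μ / 2) := by
      rw [zero_sub, neg_div, neg_inj, div_eq_iff (by positivity), ← sqrt_mul (by positivity),
        show μ / 2 * (2 * μ) = μ ^ 2 by ring, sqrt_sq hμ_pos.le]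
    rw [gaussianReal_Iic_eq_standard hv₀, hv, h_arg, stdNormalCDF_eq_toReal_gaussianReal]
  · have := nullSingletonClass_gaussianReal (μ := μ) hv₀
    exact congr_arg (2 * ENNReal.toReal ·) (measure_congr Iio_ae_eq_Iic).symm
end
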